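/- arXiv:2206.09322 — 6 statements merged into one kernel-verified Lean document; each statement's English description precedes it below -/
import Mathlib

section
/- If E is an equivalence relation on the Cantor space {0,1}^ℕ such that the eventual-agreement relation E₀ is Borel reducible to E, then there is no Borel function g from {0,1}^ℕ (with E) to a Polish space Y such that x₁ E x₂ if and only if g(x₁) = g(x₂). Equivalently stated for E = E₀: there is no Borel function g : {0,1}^ℕ → ℝ such that two sequences are E₀-equivalent iff they have the same image under g. -/
/-- The eventual-agreement equivalence relation `E₀` on Cantor space `{0,1}^ℕ`. -/
def E0 (x y : ℕ → Bool) : Prop := ∃ N, ∀ n ≥ N, x n = y n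

/-!
Write `h = g ∘ f`, so that `x E₀ y ↔ h x = h y`. Flipping finitely many coordinates gives a
countable family of homeomorphisms of `2^ℕ` whose orbits are exactly the `E₀`-classes and are
dense, so every `E₀`-invariant Baire-measurable set is meagre or comeagre (generic ergodicity).
Applied to the sets `h ⁻¹' U` for `U` in a countable basis of `Y`, this makes `h` constant on a
comeagre set, which then lies in a single `E₀`-class. But `E₀`-classes are countable, hence
meagre, since `2^ℕ` has no isolated points.
-/

open Set Filter TopologicalSpace

theorem Filter.eventually_eventually_eq_of_forall_isOpen {X Y : Type*} [TopologicalSpace Y]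
    [SecondCountableTopology Y] [T0Space Y] {l : Filter X} [CountableInterFilter l] {h : X → Y}
    (hh : ∀ U, IsOpen U → (∀ᶠ x in l, h x ∈ U) ∨ ∀ᶠ x in l, h x ∉ U) :
    ∀ᶠ x in l, ∀ᶠ y in l, h y = h x := by
  have hbasis : ∀ᶠ x in l, ∀ U ∈ countableBasis Y, ∀ᶠ y in l, (h y ∈ U ↔ h x ∈ U) := by
    refine (eventually_countable_ball (countable_countableBasis Y)).2 fun U hU => ?_
    rcases hh U ((isBasis_countableBasis Y).isOpen hU) with hin | hout
    · filter_upwards [hin] with x hx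
      filter_upwards [hin] with y hy using iff_of_true hy hx
    · filter_upwards [hout] with x hx
      filter_upwards [hout] with y hy using iff_of_false hy hx
  filter_upwards [hbasis] with x hx
  filter_upwards [(eventually_countable_ball (countable_countableBasis Y)).2 hx] with y hy
  exact (isBasis_countableBasis Y).eq_iff.2 hy

theorem BaireMeasurableSet.isMeagre_or_mem_residual_of_invariant {X ι : Type*}
    [TopologicalSpace X] [Countable ι] (φ : ι → X ≃ₜ X)
    (hφ : ∀ u : Set X, IsOpen u → u.Nonempty → ⋃ i, φ i ⁻¹' u = univ)
    {t : Set X} (ht : BaireMeasurableSet t) (hinv : ∀ i, φ i ⁻¹' t = t) :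
    IsMeagre t ∨ t ∈ residual X := by
  obtain ⟨u, hu, htu⟩ := ht.residualEq_isOpen
  replace htu := eventuallyEq_set.1 htu
  rcases u.eq_empty_or_nonempty with rfl | hne
  · left
    filter_upwards [htu] with x hx
    simpa using hx
  · right
    have hdiff : IsMeagre (u \ t) := by
      filter_upwards [htu] with x hx
      simp [hx]
    have hcover : tᶜ ⊆ ⋃ i, φ i ⁻¹' (u \ t) := by
      intro x hx
      obtain ⟨i, hi⟩ := mem_iUnion.1 ((hφ u hu hne).symm ▸ mem_univ x)
      refine mem_iUnion.2 ⟨i, hi, ?_⟩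
      rwa [← mem_preimage, hinv i]
    simpa [IsMeagre] using (isMeagre_iUnion fun i =>
      hdiff.preimage_of_isOpenMap (φ i).continuous (φ i).isOpenMap).mono hcover

theorem PiNat.exists_cylinder_subset {E : ℕ → Type*} [∀ n, TopologicalSpace (E n)]
    [∀ n, DiscreteTopology (E n)] {u : Set (∀ n, E n)} (hu : IsOpen u) {y : ∀ n, E n}
    (hy : y ∈ u) : ∃ N, cylinder y N ⊆ u := by
  obtain ⟨-, ⟨y', N, rfl⟩, hyc, hcu⟩ :=
    (isTopologicalBasis_cylinders E).exists_subset_of_mem_open hy hu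
  exact ⟨N, (mem_cylinder_iff_eq.1 hyc).subset.trans hcu⟩

namespace E0

def flipOn (s : Finset ℕ) (x : ℕ → Bool) : ℕ → Bool := fun n => xor (x n) (decide (n ∈ s))

theorem flipOn_involutive (s : Finset ℕ) : Function.Involutive (flipOn s) := fun x => by
  funext n
  simp [flipOn]

theorem continuous_flipOn (s : Finset ℕ) : Continuous (flipOn s) :=
  continuous_pi fun n => (continuous_of_discreteTopology (f := (xor · _))).comp (continuous_apply n)

def flipOnHomeomorph (s : Finset ℕ) : (ℕ → Bool) ≃ₜ (ℕ → Bool) where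
  toEquiv := (flipOn_involutive s).toPerm
  continuous_toFun := continuous_flipOn s
  continuous_invFun := continuous_flipOn s

theorem flipOn_right (s : Finset ℕ) (x : ℕ → Bool) : E0 x (flipOn s x) := by
  obtain ⟨N, hN⟩ := s.exists_nat_subset_range
  refine ⟨N, fun n hn => ?_⟩
  have : n ∉ s := fun h => (Finset.mem_range.1 (hN h)).not_ge hn
  simp [flipOn, this]

theorem exists_flipOn_eq_ite (x y : ℕ → Bool) (N : ℕ) :
    ∃ s, ∀ n, flipOn s x n = if n < N then y n else x n := by
  refine ⟨(Finset.range N).filter fun n => x n ≠ y n, fun n => ?_⟩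
  by_cases hn : n < N <;> simp only [flipOn, Finset.mem_filter, Finset.mem_range, hn] <;>
    cases x n <;> cases y n <;> rfl

theorem exists_flipOn_eq {x y : ℕ → Bool} (h : E0 x y) : ∃ s, flipOn s x = y := by
  obtain ⟨N, hN⟩ := h
  obtain ⟨s, hs⟩ := exists_flipOn_eq_ite x y N
  refine ⟨s, funext fun n => ?_⟩
  rw [hs]
  split_ifs with hn
  · rfl
  · exact hN n (not_lt.1 hn)

theorem exists_flipOn_mem_of_isOpen {u : Set (ℕ → Bool)} (hu : IsOpen u) (hne : u.Nonempty)
    (x : ℕ → Bool) : ∃ s, flipOn s x ∈ u := by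
  obtain ⟨y, hy⟩ := hne
  obtain ⟨N, hN⟩ := PiNat.exists_cylinder_subset hu hy
  obtain ⟨s, hs⟩ := exists_flipOn_eq_ite x y N
  exact ⟨s, hN fun n hn => by simp [hs, hn]⟩

theorem not_isOpen_singleton (x : ℕ → Bool) : ¬IsOpen {x} := fun h => by
  obtain ⟨N, hN⟩ := PiNat.exists_cylinder_subset h rfl
  have hflip : flipOn {N} x ∈ PiNat.cylinder x N := fun n hn => by simp [flipOn, hn.ne]
  have := congrFun (hN hflip) N
  simp [flipOn] at this

theorem isMeagre_setOf (x : ℕ → Bool) : IsMeagre {y | E0 x y} := by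
  have hsingleton (y : ℕ → Bool) : IsMeagre {y} :=
    residual_of_dense_open isOpen_compl_singleton
      (dense_compl_singleton_iff_not_open.2 (not_isOpen_singleton y))
  refine (isMeagre_iUnion fun s => hsingleton (flipOn s x)).mono fun y hy => ?_
  obtain ⟨s, rfl⟩ := exists_flipOn_eq hy
  exact mem_iUnion.2 ⟨s, rfl⟩

theorem isMeagre_or_mem_residual {t : Set (ℕ → Bool)} (ht : BaireMeasurableSet t)
    (hinv : ∀ x y, E0 x y → (x ∈ t ↔ y ∈ t)) : IsMeagre t ∨ t ∈ residual (ℕ → Bool) := by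
  refine ht.isMeagre_or_mem_residual_of_invariant flipOnHomeomorph (fun u hu hne => ?_) fun s => ?_
  · exact eq_univ_of_forall fun x => mem_iUnion.2 (exists_flipOn_mem_of_isOpen hu hne x)
  · ext x
    exact (hinv _ _ (flipOn_right s x)).symm

end E0

theorem stmt0_general {Y : Type*} [TopologicalSpace Y] [PolishSpace Y] [MeasurableSpace Y] [BorelSpace Y]
    (E : (ℕ → Bool) → (ℕ → Bool) → Prop)
    (f : (ℕ → Bool) → (ℕ → Bool)) (hf : Measurable f)
    (hred : ∀ x y, E0 x y ↔ E (f x) (f y)) :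
    ¬ ∃ g : (ℕ → Bool) → Y, Measurable g ∧ ∀ x y, E x y ↔ g x = g y := by
  rintro ⟨g, hg, hgE⟩
  have hE0 (x y : ℕ → Bool) : E0 x y ↔ g (f x) = g (f y) := (hred x y).trans (hgE _ _)
  have hdichotomy (U : Set Y) (hU : IsOpen U) :
      IsMeagre (g ∘ f ⁻¹' U) ∨ g ∘ f ⁻¹' U ∈ residual (ℕ → Bool) :=
    E0.isMeagre_or_mem_residual ((hg.comp hf) hU.measurableSet).baireMeasurableSet
      fun x y hxy => by simp only [mem_preimage, Function.comp_apply, (hE0 x y).1 hxy]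
  have hclass : ∀ᶠ x in residual (ℕ → Bool), {y | E0 x y} ∈ residual (ℕ → Bool) :=
    (eventually_eventually_eq_of_forall_isOpen fun U hU => (hdichotomy U hU).symm).mono
      fun x hx => hx.mono fun y hy => (hE0 x y).2 hy.symm
  obtain ⟨x, hx⟩ := (dense_of_mem_residual hclass).nonempty
  exact not_isMeagre_of_mem_residual hx (E0.isMeagre_setOf x)

/-- If `E₀` is Borel reducible to an equivalence relation `E` on Cantor space, then there is
no Borel function `g` into a Polish space `Y` such that `x₁ E x₂ ↔ g x₁ = g x₂`. -/
theorem stmt0 {Y : Type*} [TopologicalSpace Y] [PolishSpace Y] [MeasurableSpace Y] [BorelSpace Y]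
    (E : (ℕ → Bool) → (ℕ → Bool) → Prop) (hE : Equivalence E)
    (f : (ℕ → Bool) → (ℕ → Bool)) (hf : Measurable f)
    (hred : ∀ x y, E0 x y ↔ E (f x) (f y)) :
    ¬ ∃ g : (ℕ → Bool) → Y, Measurable g ∧ ∀ x y, E x y ↔ g x = g y :=
  stmt0_general E f hf hred
end

section
/- Let f : {0,1}^ℕ → ℝ be a Borel function such that for all x, y in {0,1}^ℕ, x E₀ y if and only if f(x) = f(y). Then a contradiction follows; i.e., no such function exists. -/
open Filter Topology Set

namespace E0aux

/-- The XOR homeomorphism of Cantor space. -/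
def xorHomeo (c : ℕ → Bool) : (ℕ → Bool) ≃ₜ (ℕ → Bool) where
  toFun x := fun n => xor (c n) (x n)
  invFun x := fun n => xor (c n) (x n)
  left_inv x := by funext n; simp
  right_inv x := by funext n; simp
  continuous_toFun := continuous_pi fun n =>
    (continuous_of_discreteTopology (f := fun b => xor (c n) b)).comp (continuous_apply n)
  continuous_invFun := continuous_pi fun n =>
    (continuous_of_discreteTopology (f := fun b => xor (c n) b)).comp (continuous_apply n)

lemma exists_cyl {U : Set (ℕ → Bool)} (hU : IsOpen U) {x : ℕ → Bool} (hx : x ∈ U) :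
    ∃ N, ∀ y : ℕ → Bool, (∀ n < N, y n = x n) → y ∈ U := by
  have h1 : U ∈ nhds x := hU.mem_nhds hx
  rw [nhds_pi, Filter.mem_pi] at h1
  obtain ⟨I, hIf, s, hs, hsub⟩ := h1
  obtain ⟨N, hN⟩ : ∃ N, ∀ i ∈ I, i < N := by
    obtain ⟨N, hNb⟩ := hIf.bddAbove
    exact ⟨N + 1, fun i hi => Nat.lt_succ_of_le (hNb hi)⟩
  refine ⟨N, fun y hy => hsub fun i hi => ?_⟩
  rw [hy i (hN i hi)]
  exact mem_of_mem_nhds (hs i)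

lemma isOpen_cyl (x : ℕ → Bool) (N : ℕ) : IsOpen {y : ℕ → Bool | ∀ n < N, y n = x n} := by
  have : {y : ℕ → Bool | ∀ n < N, y n = x n}
      = ⋂ n ∈ Finset.range N, (fun y : ℕ → Bool => y n) ⁻¹' {x n} := by
    ext y; simp
  rw [this]
  exact isOpen_biInter_finset fun n _ =>
    (continuous_apply n).isOpen_preimage _ (isOpen_discrete _)

/-- Topological 0-1 law for E₀-invariant Baire measurable sets. -/
lemma dichotomy {A : Set (ℕ → Bool)} (hA : BaireMeasurableSet A)
    (hinv : ∀ x y : ℕ → Bool, (∃ N, ∀ n ≥ N, x n = y n) → (x ∈ A ↔ y ∈ A)) :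
    IsMeagre A ∨ A ∈ residual (ℕ → Bool) := by
  obtain ⟨U, hUo, hAU⟩ := hA.residualEq_isOpen
  have hM : {x | (x ∈ A) = (x ∈ U)} ∈ residual (ℕ → Bool) := hAU
  by_cases hUe : U = ∅
  · left
    refine Filter.mem_of_superset hM fun x hx => ?_
    intro hxA
    have : x ∈ U := (Eq.to_iff hx).1 hxA
    rw [hUe] at this; exact this
  by_cases hUd : interior Uᶜ = ∅
  · right
    have hUdense : Dense U := by
      have := interior_eq_empty_iff_dense_compl.1 hUd
      rwa [compl_compl] at this
    refine Filter.mem_of_superset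
      (Filter.inter_mem hM (residual_of_dense_open hUo hUdense)) fun x hx => ?_
    exact (Eq.to_iff hx.1).2 hx.2
  · exfalso
    obtain ⟨x, hxU⟩ := Set.nonempty_iff_ne_empty.2 hUe
    obtain ⟨z, hz⟩ := Set.nonempty_iff_ne_empty.2 hUd
    obtain ⟨N₁, hN₁⟩ := exists_cyl hUo hxU
    obtain ⟨N₂, hN₂⟩ := exists_cyl isOpen_interior hz
    set M := max N₁ N₂ with hMdef
    set c : ℕ → Bool := fun n => if n < M then xor (x n) (z n) else false with hc
    set g := xorHomeo c with hg
    have hgpre : (⇑g) ⁻¹' {x | (x ∈ A) = (x ∈ U)} ∈ residual (ℕ → Bool) := by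
      rw [← Filter.mem_map, g.residual_map_eq]; exact hM
    have hR : ({x | (x ∈ A) = (x ∈ U)} ∩ (⇑g) ⁻¹' {x | (x ∈ A) = (x ∈ U)})
        ∈ residual (ℕ → Bool) := Filter.inter_mem hM hgpre
    obtain ⟨y, hycyl, hy1, hy2⟩ :
        ∃ y, (∀ n < M, y n = x n) ∧ ((y ∈ A) = (y ∈ U)) ∧ ((g y ∈ A) = (g y ∈ U)) := by
      have hd := dense_of_mem_residual hR
      obtain ⟨y, hyR, hycyl⟩ := hd.exists_mem_open (isOpen_cyl x M) ⟨x, fun n _ => rfl⟩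
      exact ⟨y, hycyl, hyR.1, hyR.2⟩
    -- y ∈ U, hence y ∈ A
    have hyU : y ∈ U := hN₁ y fun n hn => hycyl n (lt_of_lt_of_le hn (le_max_left _ _))
    have hyA : y ∈ A := (Eq.to_iff hy1).2 hyU
    -- g y agrees with z below M
    have hgz : ∀ n < M, g y n = z n := by
      intro n hn
      show xor (c n) (y n) = z n
      rw [hc]; simp only [if_pos hn]
      rw [hycyl n hn]
      cases x n <;> cases z n <;> rfl
    -- g y is E₀-equivalent to y, hence in A
    have hgyA : g y ∈ A := by
      refine (hinv y (g y) ⟨M, fun n hn => ?_⟩).1 hyA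
      show y n = xor (c n) (y n)
      rw [hc]; simp [Nat.not_lt_of_ge hn]
    have hgyU : g y ∈ U := (Eq.to_iff hy2).1 hgyA
    have : g y ∈ interior Uᶜ := hN₂ (g y) fun n hn =>
      hgz n (lt_of_lt_of_le hn (le_max_right _ _))
    exact interior_subset this hgyU

/-- The E₀ class of a point is meager. -/
lemma class_meager (x₀ : ℕ → Bool) : IsMeagre {y : ℕ → Bool | ∃ N, ∀ n ≥ N, y n = x₀ n} := by
  have : {y : ℕ → Bool | ∃ N, ∀ n ≥ N, y n = x₀ n}
      = ⋃ N : ℕ, {y : ℕ → Bool | ∀ n ≥ N, y n = x₀ n} := by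
    ext y; simp
  rw [this]
  refine isMeagre_iUnion fun N => ?_
  -- each C_N is closed with dense complement
  have hclosed : IsClosed {y : ℕ → Bool | ∀ n ≥ N, y n = x₀ n} := by
    have : {y : ℕ → Bool | ∀ n ≥ N, y n = x₀ n}
        = ⋂ n, ⋂ (_ : n ≥ N), (fun y : ℕ → Bool => y n) ⁻¹' {x₀ n} := by
      ext y; simp
    rw [this]
    exact isClosed_iInter fun n => isClosed_iInter fun _ =>
      (isClosed_discrete _).preimage (continuous_apply n)
  have hdense : Dense {y : ℕ → Bool | ∀ n ≥ N, y n = x₀ n}ᶜ := by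
    rw [dense_iff_inter_open]
    rintro U hUo ⟨y, hy⟩
    by_cases hyC : y ∈ {y : ℕ → Bool | ∀ n ≥ N, y n = x₀ n}
    · obtain ⟨M, hM⟩ := exists_cyl hUo hy
      set k := max M N with hk
      set z := Function.update y k (!(y k)) with hz
      refine ⟨z, hM z fun n hn => ?_, ?_⟩
      · rw [hz, Function.update_of_ne (by omega)]
      · intro hzC
        have h1 : z k = x₀ k := hzC k (le_max_right _ _)
        have h2 : y k = x₀ k := hyC k (le_max_right _ _)
        rw [hz, Function.update_self, h2] at h1
        exact Bool.not_ne_self _ h1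
    · exact ⟨y, hy, hyC⟩
  exact Filter.mem_of_superset
    (residual_of_dense_open hclosed.isOpen_compl hdense) (subset_refl _)

end E0aux

open E0aux Filter Set in
/-- `E₀` is not smooth: there is no Borel function `f : {0,1}^ℕ → ℝ` such that
`x E₀ y ↔ f x = f y`. -/
theorem stmt3 (f : (ℕ → Bool) → ℝ) (hf : Measurable f)
    (h : ∀ x y : ℕ → Bool, (∃ N, ∀ n ≥ N, x n = y n) ↔ f x = f y) : False := by
  set B : ℚ → Set (ℕ → Bool) := fun q => f ⁻¹' (Set.Iic (q : ℝ)) with hB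
  have hinv : ∀ q, ∀ x y : ℕ → Bool, (∃ N, ∀ n ≥ N, x n = y n) → (x ∈ B q ↔ y ∈ B q) := by
    intro q x y hxy
    have := (h x y).1 hxy
    simp only [hB, Set.mem_preimage, this]
  have dich : ∀ q, IsMeagre (B q) ∨ B q ∈ residual (ℕ → Bool) := fun q =>
    dichotomy ((hf measurableSet_Iic).baireMeasurableSet) (hinv q)
  set S : Set ℚ := {q | B q ∈ residual (ℕ → Bool)} with hS
  -- S is nonempty
  have hSne : S.Nonempty := by
    by_contra hSe
    push_neg at hSe
    have hall : ∀ q, IsMeagre (B q) := fun q =>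
      (dich q).resolve_right (Set.eq_empty_iff_forall_notMem.1 hSe q)
    have : (⋂ q : ℚ, (B q)ᶜ) ∈ residual (ℕ → Bool) := countable_iInter_mem.2 hall
    obtain ⟨x, hx⟩ := (dense_of_mem_residual this).nonempty
    obtain ⟨q, hq⟩ := exists_rat_gt (f x)
    exact (Set.mem_iInter.1 hx q) hq.le
  -- S is not everything
  have hScne : ∃ q, q ∉ S := by
    by_contra hSa
    push_neg at hSa
    have : (⋂ q : ℚ, B q) ∈ residual (ℕ → Bool) := countable_iInter_mem.2 hSa
    obtain ⟨x, hx⟩ := (dense_of_mem_residual this).nonempty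
    obtain ⟨q, hq⟩ := exists_rat_lt (f x)
    exact absurd (Set.mem_iInter.1 hx q) (not_le.2 hq)
  obtain ⟨q₀, hq₀⟩ := hScne
  -- lower bound
  have hbdd : BddBelow ((fun q : ℚ => (q : ℝ)) '' S) := by
    refine ⟨(q₀ : ℝ), ?_⟩
    rintro _ ⟨p, hp, rfl⟩
    have hqp : q₀ ≤ p := by
      by_contra hlt
      push_neg at hlt
      have hc : (p : ℝ) ≤ (q₀ : ℝ) := by exact_mod_cast hlt.le
      have hsub : B p ⊆ B q₀ := fun x hx => by
        simp only [hB, Set.mem_preimage, Set.mem_Iic] at hx ⊢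
        exact le_trans hx hc
      exact hq₀ (Set.mem_setOf.2 (Filter.mem_of_superset (Set.mem_setOf.1 hp) hsub))
    show (q₀ : ℝ) ≤ (p : ℝ)
    exact_mod_cast hqp
  set r : ℝ := sInf ((fun q : ℚ => (q : ℝ)) '' S) with hr
  -- the comeager set where f is "pinned"
  set G : Set (ℕ → Bool) :=
    (⋂ q ∈ S, B q) ∩ (⋂ q ∈ Sᶜ, (B q)ᶜ) with hG
  have hGres : G ∈ residual (ℕ → Bool) := by
    refine Filter.inter_mem ?_ ?_
    · exact (countable_bInter_mem S.to_countable).2 fun q hq => hq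
    · exact (countable_bInter_mem Sᶜ.to_countable).2 fun q hq =>
        (dich q).resolve_right hq
  have hfconst : ∀ x ∈ G, f x = r := by
    rintro x ⟨hx1, hx2⟩
    have hle : f x ≤ r := by
      refine le_csInf (hSne.image _) ?_
      rintro _ ⟨p, hp, rfl⟩
      exact Set.mem_iInter₂.1 hx1 p hp
    have hge : r ≤ f x := by
      by_contra hlt
      push_neg at hlt
      obtain ⟨q, hq1, hq2⟩ := exists_rat_btwn hlt
      have hqS : q ∉ S := by
        intro hqS
        exact absurd (csInf_le hbdd ⟨q, hqS, rfl⟩) (not_le.2 hq2)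
      exact (Set.mem_iInter₂.1 hx2 q hqS) hq1.le
    linarith
  obtain ⟨x₀, hx₀⟩ := (dense_of_mem_residual hGres).nonempty
  -- G lies in the E₀-class of x₀
  have hGC : G ⊆ {y : ℕ → Bool | ∃ N, ∀ n ≥ N, y n = x₀ n} := fun y hy =>
    (h y x₀).2 (by rw [hfconst y hy, hfconst x₀ hx₀])
  have hCmeager := class_meager x₀
  have : (G ∩ {y : ℕ → Bool | ∃ N, ∀ n ≥ N, y n = x₀ n}ᶜ) ∈ residual (ℕ → Bool) :=
    Filter.inter_mem hGres hCmeager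
  obtain ⟨y, hy1, hy2⟩ := (dense_of_mem_residual this).nonempty
  exact hy2 (hGC hy1)
end

section
/- Let M be a compact metric space and X the Polish space of continuous self-maps of M with the uniform topology. For each m ∈ ℕ, the set U_m = {f ∈ X : f has exactly m fixed points} is a Borel subset of X. -/
open Set

lemma le_encard_iff_inj {α : Type*} (s : Set α) (k : ℕ) :
    (k : ℕ∞) ≤ s.encard ↔ ∃ x : Fin k → α, Function.Injective x ∧ ∀ i, x i ∈ s := by
  constructor
  · intro h
    obtain ⟨t, hts, ht⟩ := Set.exists_subset_encard_eq h
    have htf : t.Finite := Set.finite_of_encard_eq_coe ht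
    haveI : Fintype t := htf.fintype
    have hc : Fintype.card t = k := by
      have h2 := Set.encard_eq_coe_toFinset_card t
      rw [ht, Set.toFinset_card] at h2
      exact_mod_cast h2.symm
    obtain e := Fintype.equivFinOfCardEq hc
    exact ⟨fun i => (e.symm i : α), fun i j hij => by
      simpa using e.symm.injective (Subtype.ext hij), fun i => hts (e.symm i).2⟩
  · rintro ⟨x, hinj, hmem⟩
    have h1 : (Set.range x).encard = k := by
      rw [← Set.image_univ, hinj.injOn.encard_image, Set.encard_univ]
      simp
    rw [← h1]
    exact Set.encard_mono (Set.range_subset_iff.2 hmem)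

lemma le_encard_iff_eps {M : Type*} [MetricSpace M] (s : Set M) (k : ℕ) :
    (k : ℕ∞) ≤ s.encard ↔ ∃ n : ℕ, ∃ x : Fin k → M,
      (∀ i, x i ∈ s) ∧ ∀ i j, i ≠ j → 1 / ((n : ℝ) + 1) ≤ dist (x i) (x j) := by
  rw [le_encard_iff_inj]
  constructor
  · rintro ⟨x, hinj, hmem⟩
    by_cases hk : ∃ p : Fin k × Fin k, p.1 ≠ p.2
    · set P : Finset (Fin k × Fin k) := Finset.univ.filter (fun p => p.1 ≠ p.2) with hP
      have hPne : P.Nonempty := by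
        obtain ⟨p, hp⟩ := hk
        exact ⟨p, by simp [hP, hp]⟩
      set ε := P.inf' hPne (fun p => dist (x p.1) (x p.2)) with hε
      have hεpos : 0 < ε := by
        rw [hε, Finset.lt_inf'_iff]
        rintro p hp
        rw [hP, Finset.mem_filter] at hp
        exact dist_pos.2 fun h => hp.2 (hinj h)
      obtain ⟨n, hn⟩ := exists_nat_one_div_lt hεpos
      refine ⟨n, x, hmem, fun i j hij => le_trans hn.le ?_⟩
      exact Finset.inf'_le (fun p : Fin k × Fin k => dist (x p.1) (x p.2)) (show ((i,j) : Fin k × Fin k) ∈ P from Finset.mem_filter.2 ⟨Finset.mem_univ _, hij⟩)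
    · exact ⟨0, x, hmem, fun i j hij => absurd ⟨(i, j), hij⟩ hk⟩
  · rintro ⟨n, x, hmem, hdist⟩
    refine ⟨x, fun i j hij => by_contra fun h => ?_, hmem⟩
    have := hdist i j h
    rw [hij, dist_self] at this
    have : (0:ℝ) < 1 / ((n:ℝ)+1) := by positivity
    linarith [hdist i j h, (dist_self (x j)).le]


lemma isClosed_C {M : Type*} [MetricSpace M] [CompactSpace M] (k n : ℕ) :
    IsClosed (Prod.snd '' {p : (Fin k → M) × C(M, M) |
      (∀ i, p.2 (p.1 i) = p.1 i) ∧
      ∀ i j, i ≠ j → 1 / ((n : ℝ) + 1) ≤ dist (p.1 i) (p.1 j)}) := by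
  apply isClosedMap_snd_of_compactSpace
  rw [Set.setOf_and]
  apply IsClosed.inter
  · rw [setOf_forall]
    refine isClosed_iInter fun i => ?_
    have hc : Continuous fun p : (Fin k → M) × C(M, M) => (p.2 (p.1 i), p.1 i) := by
      refine Continuous.prodMk ?_ ((continuous_apply i).comp continuous_fst)
      exact continuous_eval.comp
        (continuous_snd.prodMk ((continuous_apply i).comp continuous_fst))
    exact isClosed_eq hc.fst hc.snd
  · rw [setOf_forall]
    refine isClosed_iInter fun i => ?_
    rw [setOf_forall]
    refine isClosed_iInter fun j => ?_
    rcases eq_or_ne i j with rfl | hij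
    · simp
    · have : {p : (Fin k → M) × C(M, M) | i ≠ j → 1 / ((n : ℝ) + 1) ≤ dist (p.1 i) (p.1 j)}
          = {p | 1 / ((n : ℝ) + 1) ≤ dist (p.1 i) (p.1 j)} := by
        ext p; simp [hij]
      rw [this]
      exact isClosed_le continuous_const
        (Continuous.dist ((continuous_apply i).comp continuous_fst)
          ((continuous_apply j).comp continuous_fst))

/-- For a compact metric space `M`, the set of continuous self-maps of `M` with exactly `m`
fixed points is Borel in `C(M, M)` with the uniform (= compact-open) topology. -/
theorem stmt5 {M : Type*} [MetricSpace M] [CompactSpace M] (m : ℕ) :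
    @MeasurableSet C(M, M) (borel C(M, M)) {f : C(M, M) | {x : M | f x = x}.encard = m} := by
  letI : MeasurableSpace C(M, M) := borel C(M, M)
  haveI : BorelSpace C(M, M) := ⟨rfl⟩
  have key : ∀ k : ℕ, MeasurableSet {f : C(M, M) | (k : ℕ∞) ≤ {x : M | f x = x}.encard} := by
    intro k
    have heq : {f : C(M, M) | (k : ℕ∞) ≤ {x : M | f x = x}.encard}
        = ⋃ n : ℕ, Prod.snd '' {p : (Fin k → M) × C(M, M) |
            (∀ i, p.2 (p.1 i) = p.1 i) ∧
            ∀ i j, i ≠ j → 1 / ((n : ℝ) + 1) ≤ dist (p.1 i) (p.1 j)} := by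
      ext f
      simp only [mem_setOf_eq, mem_iUnion, Set.mem_image, le_encard_iff_eps]
      constructor
      · rintro ⟨n, x, hmem, hdist⟩
        exact ⟨n, (x, f), ⟨hmem, hdist⟩, rfl⟩
      · rintro ⟨n, ⟨x, g⟩, ⟨hmem, hdist⟩, rfl⟩
        exact ⟨n, x, hmem, hdist⟩
    rw [heq]
    exact MeasurableSet.iUnion fun n => (isClosed_C k n).measurableSet
  have heq2 : {f : C(M, M) | {x : M | f x = x}.encard = m}
      = {f : C(M, M) | (m : ℕ∞) ≤ {x : M | f x = x}.encard}
        \ {f : C(M, M) | ((m + 1 : ℕ) : ℕ∞) ≤ {x : M | f x = x}.encard} := by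
    ext f
    simp only [mem_setOf_eq, mem_diff, not_le]
    constructor
    · intro h
      rw [h]
      refine ⟨le_refl _, ?_⟩
      exact_mod_cast Nat.lt_succ_self m
    · rintro ⟨h1, h2⟩
      push_cast at h2
      exact le_antisymm ((ENat.lt_add_one_iff (by simp)).1 h2) h1
  rw [heq2]
  exact (key m).diff (key (m + 1))
end

section
/- Every permutation φ of ℕ can be written as a convergent infinite product of transpositions: there is a sequence of transpositions φ₁, φ₂, … such that, setting Φ_n = φ_n ∘ ⋯ ∘ φ₁, we have φ = lim_{n→∞} Φ_n pointwise, each transposition occurs at most once in the sequence, and each natural number m is moved (i.e., φ_i(m) ≠ m) by at most two of the transpositions φ_i. -/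
namespace Stmt7
open Equiv Function

variable (φ : Equiv.Perm ℕ)

/-- Least element of the cycle (orbit) of `m`. -/
noncomputable def base (m : ℕ) : ℕ := sInf {x | φ.SameCycle m x}

lemma sameCycle_base (m : ℕ) : φ.SameCycle m (base φ m) :=
  Nat.sInf_mem (s := {x | φ.SameCycle m x}) ⟨m, Equiv.Perm.SameCycle.refl φ m⟩

lemma base_eq_of_sameCycle {m m' : ℕ} (h : φ.SameCycle m m') :
    base φ m = base φ m' := by
  unfold base
  congr 1
  ext x
  exact ⟨fun h' => h.symm.trans h', fun h' => h.trans h'⟩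

lemma base_base (m : ℕ) : base φ (base φ m) = base φ m :=
  (base_eq_of_sameCycle φ (sameCycle_base φ m)).symm

lemma base_of_sc {b u : ℕ} (hb : base φ b = b) (h : φ.SameCycle b u) :
    base φ u = b := (base_eq_of_sameCycle φ h).symm.trans hb

lemma zfix {b : ℕ} {i j : ℤ} (h : (φ^i) b = (φ^j) b) : (φ^(j-i)) b = b := by
  have h1 : (φ ^ (j - i)) b = (φ ^ (-i)) ((φ ^ j) b) := by
    rw [← Equiv.Perm.mul_apply, ← zpow_add, sub_eq_neg_add]
  rw [h1, ← h, ← Equiv.Perm.mul_apply, ← zpow_add]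
  simp

lemma period_of_fix {b : ℕ} {d : ℤ} (hd : 0 < d) (h : (φ^d) b = b) :
    0 < Function.minimalPeriod (⇑φ) b ∧
      Function.minimalPeriod (⇑φ) b ≤ d.toNat := by
  have hh : (φ^(d.toNat)) b = b := by
    rw [← zpow_natCast]
    rw [Int.toNat_of_nonneg hd.le]
    exact h
  have hp : Function.IsPeriodicPt (⇑φ) d.toNat b := by
    rw [Function.IsPeriodicPt, Function.IsFixedPt, Equiv.Perm.iterate_eq_pow]
    exact hh
  have h0 : 0 < d.toNat := by omega
  exact ⟨hp.minimalPeriod_pos h0, hp.minimalPeriod_le h0⟩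

lemma zinj {b : ℕ} (hs : Function.minimalPeriod (⇑φ) b = 0) {i j : ℤ}
    (h : (φ^i) b = (φ^j) b) : i = j := by
  rcases lt_trichotomy i j with h' | h' | h'
  · have := period_of_fix φ (by omega : (0:ℤ) < j - i) (zfix φ h)
    omega
  · exact h'
  · have := period_of_fix φ (by omega : (0:ℤ) < i - j) (zfix φ h.symm)
    omega

lemma ninj {b : ℕ} (hs0 : 0 < Function.minimalPeriod (⇑φ) b) {i j : ℕ}
    (hi : i < Function.minimalPeriod (⇑φ) b) (hj : j < Function.minimalPeriod (⇑φ) b)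
    (h : (φ^i) b = (φ^j) b) : i = j := by
  have h' : (φ^(i:ℤ)) b = (φ^(j:ℤ)) b := by
    rw [zpow_natCast, zpow_natCast]; exact h
  rcases lt_trichotomy i j with h'' | h'' | h''
  · have := period_of_fix φ (by omega : (0:ℤ) < (j:ℤ) - i) (zfix φ h')
    omega
  · exact h''
  · have := period_of_fix φ (by omega : (0:ℤ) < (i:ℤ) - j) (zfix φ h'.symm)
    omega

lemma npow_period (b : ℕ) : (φ^(Function.minimalPeriod (⇑φ) b)) b = b := by
  rw [← Equiv.Perm.iterate_eq_pow]
  exact Function.iterate_minimalPeriod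

/-- The transposition sequence, per orbit `b`, indexed by `j`. -/
noncomputable def T (b j : ℕ) : Equiv.Perm ℕ :=
  if base φ b = b then
    if Function.minimalPeriod (⇑φ) b = 0 then
      if j % 2 = 0 then
        Equiv.swap ((φ^(-((j:ℤ)/2)-1)) b) ((φ^((j:ℤ)/2+1)) b)
      else
        Equiv.swap ((φ^(-((j:ℤ)/2))) b) ((φ^((j:ℤ)/2+1)) b)
    else
      if 2 ≤ Function.minimalPeriod (⇑φ) b ∧ j ≤ Function.minimalPeriod (⇑φ) b - 2 then
        Equiv.swap ((φ^(Function.minimalPeriod (⇑φ) b - 2 - j)) b)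
          ((φ^(Function.minimalPeriod (⇑φ) b - 1 - j)) b)
      else 1
  else 1

noncomputable def tt (n : ℕ) : Equiv.Perm ℕ := T φ n.unpair.1 n.unpair.2

noncomputable def Q (b k : ℕ) : Equiv.Perm ℕ :=
  (List.range k).foldl (fun acc j => T φ b j * acc) 1

noncomputable def Φ (n : ℕ) : Equiv.Perm ℕ :=
  (List.range n).foldl (fun acc i => tt φ i * acc) 1

lemma foldl_step (f : ℕ → Equiv.Perm ℕ) (n : ℕ) :
    (List.range (n+1)).foldl (fun acc i => f i * acc) 1
      = f n * (List.range n).foldl (fun acc i => f i * acc) 1 := by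
  rw [List.range_succ, List.foldl_append]
  rfl

lemma Q_succ (b k : ℕ) : Q φ b (k+1) = T φ b k * Q φ b k := foldl_step _ _

lemma Φ_succ (n : ℕ) : Φ φ (n+1) = tt φ n * Φ φ n := foldl_step _ _

lemma sc_zpow (b : ℕ) (i : ℤ) : φ.SameCycle b ((φ^i) b) := ⟨i, rfl⟩

lemma sc_npow (b : ℕ) (i : ℕ) : φ.SameCycle b ((φ^i) b) :=
  ⟨i, by rw [zpow_natCast]⟩

/-- Structure of `T`. -/
lemma T_cases (b j : ℕ) :
    T φ b j = 1 ∨ ∃ u v : ℕ, u ≠ v ∧ T φ b j = Equiv.swap u v ∧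
      φ.SameCycle b u ∧ φ.SameCycle b v ∧ base φ b = b := by
  unfold T
  by_cases hb : base φ b = b
  · rw [if_pos hb]
    by_cases hs : Function.minimalPeriod (⇑φ) b = 0
    · rw [if_pos hs]
      by_cases hj : j % 2 = 0
      · rw [if_pos hj]
        refine Or.inr ⟨_, _, ?_, rfl, sc_zpow φ b _, sc_zpow φ b _, hb⟩
        intro h
        have := zinj φ hs h
        omega
      · rw [if_neg hj]
        refine Or.inr ⟨_, _, ?_, rfl, sc_zpow φ b _, sc_zpow φ b _, hb⟩
        intro h
        have := zinj φ hs h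
        omega
    · rw [if_neg hs]
      by_cases hc : 2 ≤ Function.minimalPeriod (⇑φ) b ∧
          j ≤ Function.minimalPeriod (⇑φ) b - 2
      · rw [if_pos hc]
        refine Or.inr ⟨_, _, ?_, rfl, sc_npow φ b _, sc_npow φ b _, hb⟩
        intro h
        have := ninj φ (by omega) (by omega) (by omega) h
        omega
      · rw [if_neg hc]
        exact Or.inl rfl
  · rw [if_neg hb]
    exact Or.inl rfl

lemma T_fix (b j x : ℕ) (hx : base φ x ≠ b) : T φ b j x = x := by
  rcases T_cases φ b j with h | ⟨u, v, huv, hT, hu, hv, hb⟩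
  · rw [h]; rfl
  · rw [hT]
    apply Equiv.swap_apply_of_ne_of_ne
    · intro h; exact hx (h ▸ base_of_sc φ hb hu)
    · intro h; exact hx (h ▸ base_of_sc φ hb hv)

/-- counting function -/
noncomputable def g (b n : ℕ) : ℕ :=
  ((Finset.range n).filter (fun i => i.unpair.1 = b)).card

lemma pair_lt_iff (b : ℕ) {x y : ℕ} : Nat.pair b x < Nat.pair b y ↔ x < y := by
  constructor
  · intro h
    rcases lt_trichotomy x y with h' | h' | h'
    · exact h'
    · subst h'; omega
    · have := Nat.pair_lt_pair_right b h'; omega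
  · exact Nat.pair_lt_pair_right b

lemma pair_inj (b : ℕ) : Function.Injective (Nat.pair b) := by
  intro x y h
  have := congrArg Nat.unpair h
  simpa [Nat.unpair_pair] using this

lemma g_pair (b j : ℕ) : g b (Nat.pair b j) = j := by
  unfold g
  have himg : (Finset.range (Nat.pair b j)).filter (fun i => i.unpair.1 = b)
      = (Finset.range j).image (Nat.pair b) := by
    ext i
    simp only [Finset.mem_filter, Finset.mem_image, Finset.mem_range]
    constructor
    · rintro ⟨hlt, hbi⟩
      have hpe : Nat.pair b i.unpair.2 = i := by rw [← hbi]; exact Nat.pair_unpair i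
      refine ⟨i.unpair.2, ?_, ?_⟩
      · rw [← pair_lt_iff b, hpe]
        exact hlt
      · exact hpe
    · rintro ⟨k, hk, rfl⟩
      exact ⟨(pair_lt_iff b).mpr hk, Nat.unpair_pair b k ▸ rfl⟩
  rw [himg, Finset.card_image_of_injective _ (pair_inj b), Finset.card_range]

lemma g_succ (b n : ℕ) :
    g b (n+1) = if n.unpair.1 = b then g b n + 1 else g b n := by
  unfold g
  rw [Finset.range_add_one, Finset.filter_insert]
  split_ifs with h
  · rw [Finset.card_insert_of_notMem (by simp)]
  · rfl

lemma Q_sc (b k m : ℕ) (h : φ.SameCycle b m) : φ.SameCycle b (Q φ b k m) := by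
  induction k with
  | zero => simpa [Q] using h
  | succ k ih =>
    rw [Q_succ, Equiv.Perm.mul_apply]
    rcases T_cases φ b k with h1 | ⟨u, v, huv, hT, hu, hv, hb⟩
    · rw [h1]; simpa using ih
    · rw [hT, Equiv.swap_apply_def]
      split_ifs
      · exact hv
      · exact hu
      · exact ih

lemma Phi_eq (m n : ℕ) : Φ φ n m = Q φ (base φ m) (g (base φ m) n) m := by
  set b := base φ m with hbdef
  have hb : base φ b = b := base_base φ m
  have hscm : φ.SameCycle b m := (sameCycle_base φ m).symm
  induction n with
  | zero => simp [Φ, Q, g]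
  | succ n ih =>
    rw [Φ_succ, Equiv.Perm.mul_apply, ih]
    by_cases h : n.unpair.1 = b
    · have hn : n = Nat.pair b n.unpair.2 := by rw [← h, Nat.pair_unpair]
      have hgn : g b n = n.unpair.2 := by
        conv_lhs => rw [hn]
        exact g_pair b n.unpair.2
      rw [g_succ, if_pos h, Q_succ, Equiv.Perm.mul_apply, tt, h, hgn]
    · rw [g_succ, if_neg h]
      apply T_fix
      have : base φ (Q φ b (g b n) m) = b :=
        base_of_sc φ hb (Q_sc φ b _ m hscm)
      rw [this]
      exact fun hh => h hh.symm

lemma swap_zpow_apply {b : ℕ} (hs : Function.minimalPeriod (⇑φ) b = 0) (a c d : ℤ) :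
    Equiv.swap ((φ^a) b) ((φ^c) b) ((φ^d) b)
      = (φ^(if d = a then c else if d = c then a else d)) b := by
  split_ifs with h1 h2
  · rw [h1]; exact Equiv.swap_apply_left _ _
  · rw [h2]; exact Equiv.swap_apply_right _ _
  · exact Equiv.swap_apply_of_ne_of_ne (fun h => h1 (zinj φ hs h))
      (fun h => h2 (zinj φ hs h))

lemma swap_pow_apply {b : ℕ} (hs0 : 0 < Function.minimalPeriod (⇑φ) b) {a c d : ℕ}
    (ha : a < Function.minimalPeriod (⇑φ) b) (hc : c < Function.minimalPeriod (⇑φ) b)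
    (hd : d < Function.minimalPeriod (⇑φ) b) :
    Equiv.swap ((φ^a) b) ((φ^c) b) ((φ^d) b)
      = (φ^(if d = a then c else if d = c then a else d)) b := by
  split_ifs with h1 h2
  · rw [h1]; exact Equiv.swap_apply_left _ _
  · rw [h2]; exact Equiv.swap_apply_right _ _
  · exact Equiv.swap_apply_of_ne_of_ne (fun h => h1 (ninj φ hs0 hd ha h))
      (fun h => h2 (ninj φ hs0 hd hc h))

lemma zpow_congr (b : ℕ) {x y : ℤ} (h : x = y) : (φ^x) b = (φ^y) b := by rw [h]

lemma npow_congr (b : ℕ) {x y : ℕ} (h : x = y) : (φ^x) b = (φ^y) b := by rw [h]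

lemma Q_inf {b : ℕ} (hb : base φ b = b) (hs : Function.minimalPeriod (⇑φ) b = 0)
    (K : ℕ) (i : ℤ) :
    Q φ b (2*K) ((φ^i) b)
      = (φ^(if -(K:ℤ) ≤ i ∧ i < K then i+1 else if i = K then -(K:ℤ) else i)) b := by
  induction K generalizing i with
  | zero =>
    simp only [Nat.mul_zero, Q, List.range_zero, List.foldl_nil, Equiv.Perm.one_apply]
    apply zpow_congr
    split_ifs <;> omega
  | succ K ih =>
    have e1 : 2*(K+1) = (2*K+1)+1 := by ring
    rw [e1, Q_succ, Equiv.Perm.mul_apply, Q_succ, Equiv.Perm.mul_apply, ih]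
    have hT0 : T φ b (2*K)
        = Equiv.swap ((φ^(-(((2*K:ℕ):ℤ)/2)-1)) b) ((φ^(((2*K:ℕ):ℤ)/2+1)) b) := by
      unfold T
      rw [if_pos hb, if_pos hs, if_pos (Nat.mul_mod_right 2 K)]
    have hT1 : T φ b (2*K+1)
        = Equiv.swap ((φ^(-(((2*K+1:ℕ):ℤ)/2))) b) ((φ^(((2*K+1:ℕ):ℤ)/2+1)) b) := by
      unfold T
      rw [if_pos hb, if_pos hs, if_neg (by omega)]
    rw [hT0, swap_zpow_apply φ hs, hT1, swap_zpow_apply φ hs]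
    apply zpow_congr
    split_ifs <;> omega

lemma Q_fin {b : ℕ} (hb : base φ b = b)
    (hs0 : 0 < Function.minimalPeriod (⇑φ) b) :
    ∀ j, j ≤ Function.minimalPeriod (⇑φ) b - 1 →
    ∀ i, i < Function.minimalPeriod (⇑φ) b →
    Q φ b j ((φ^i) b)
      = (φ^(if Function.minimalPeriod (⇑φ) b - 1 - j ≤ i ∧
              i ≤ Function.minimalPeriod (⇑φ) b - 2 ∧
              2 ≤ Function.minimalPeriod (⇑φ) b then i+1
            else if i = Function.minimalPeriod (⇑φ) b - 1 then
              Function.minimalPeriod (⇑φ) b - 1 - j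
            else i)) b := by
  set s := Function.minimalPeriod (⇑φ) b with hsdef
  clear_value s
  intro j
  induction j with
  | zero =>
    intro _ i hi
    simp only [Q, List.range_zero, List.foldl_nil, Equiv.Perm.one_apply]
    apply npow_congr
    split_ifs <;> omega
  | succ j ih =>
    intro hj i hi
    have hj' : j ≤ s - 1 := by omega
    have hs2 : 2 ≤ s := by omega
    have hs0' : 0 < Function.minimalPeriod (⇑φ) b := by omega
    rw [Q_succ, Equiv.Perm.mul_apply, ih hj' i hi]
    have hT : T φ b j = Equiv.swap ((φ^(s-2-j)) b) ((φ^(s-1-j)) b) := by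
      unfold T
      rw [← hsdef, if_pos hb, if_neg (by omega), if_pos ⟨hs2, by omega⟩]
    rw [hT, swap_pow_apply φ hs0' (by omega) (by omega) (by split_ifs <;> omega)]
    apply npow_congr
    split_ifs <;> omega

/-- reduction of an integer exponent to a natural one for periodic points -/
lemma reduce_exp {b : ℕ} (hs0 : 0 < Function.minimalPeriod (⇑φ) b) (i : ℤ) :
    ∃ i₀ : ℕ, i₀ < Function.minimalPeriod (⇑φ) b ∧ (φ^(i₀:ℕ)) b = (φ^i) b := by
  set s := Function.minimalPeriod (⇑φ) b with hsdef
  have hsb : (φ^((s:ℕ):ℤ)) b = b := by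
    rw [zpow_natCast]; exact npow_period φ b
  refine ⟨(i % (s:ℤ)).toNat, ?_, ?_⟩
  · have h1 : 0 ≤ i % (s:ℤ) := Int.emod_nonneg i (by omega)
    have h2 : i % (s:ℤ) < s := Int.emod_lt_of_pos i (by omega)
    omega
  · have h1 : 0 ≤ i % (s:ℤ) := Int.emod_nonneg i (by omega)
    rw [← zpow_natCast, Int.toNat_of_nonneg h1]
    have hq : (φ^((s:ℤ)*(i/(s:ℤ)))) b = b := by
      rw [zpow_mul]
      exact Equiv.Perm.zpow_apply_eq_self_of_apply_eq_self hsb _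
    have : (φ^i) b = (φ^(i % (s:ℤ) + (s:ℤ)*(i/(s:ℤ)))) b := by
      apply zpow_congr
      exact (Int.emod_add_mul_ediv i (s:ℤ)).symm
    rw [this, zpow_add, Equiv.Perm.mul_apply, hq]

/-- Key convergence lemma. -/
lemma key (m : ℕ) : ∃ N, Φ φ N m = φ m ∧ ∀ n ≥ N, tt φ n (φ m) = φ m := by
  set b := base φ m with hbdef
  have hb : base φ b = b := base_base φ m
  have hscm : φ.SameCycle b m := (sameCycle_base φ m).symm
  obtain ⟨i, hi⟩ := hscm
  by_cases hs : Function.minimalPeriod (⇑φ) b = 0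
  · -- infinite orbit
    set K := i.natAbs + 1 with hK
    have hφm : φ ((φ^i) b) = (φ^(i+1)) b := by
      rw [add_comm, zpow_add, zpow_one, Equiv.Perm.mul_apply]
    refine ⟨Nat.pair b (2*K), ?_, ?_⟩
    · rw [Phi_eq, ← hbdef, g_pair, ← hi, Q_inf φ hb hs, hφm]
      apply zpow_congr
      split_ifs <;> omega
    · intro n hn
      have hφm2 : φ m = (φ^(i+1)) b := by rw [← hi]; exact hφm
      rw [tt]
      by_cases hb' : n.unpair.1 = b
      · have hn' : n = Nat.pair b n.unpair.2 := by rw [← hb', Nat.pair_unpair]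
        set j := n.unpair.2 with hjdef
        have hjge : 2*K ≤ j := by
          by_contra hh
          have := (pair_lt_iff b).mpr (by omega : j < 2*K)
          omega
        rw [hb', hφm2]
        unfold T
        rw [if_pos hb, if_pos hs]
        split_ifs with hpar
        · rw [swap_zpow_apply φ hs]
          apply zpow_congr
          split_ifs <;> omega
        · rw [swap_zpow_apply φ hs]
          apply zpow_congr
          split_ifs <;> omega
      · apply T_fix
        have hsc : φ.SameCycle b (φ m) := by
          rw [hφm2]; exact sc_zpow φ b _
        rw [base_of_sc φ hb hsc]
        exact fun hh => hb' hh.symm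
  · -- finite orbit
    have hs0 : 0 < Function.minimalPeriod (⇑φ) b := by omega
    set s := Function.minimalPeriod (⇑φ) b with hsdef
    obtain ⟨i₀, hi₀, hei⟩ := reduce_exp φ hs0 i
    have him : (φ^(i₀:ℕ)) b = m := by rw [hei, hi]
    have hφm : φ ((φ^(i₀:ℕ)) b) = (φ^(i₀+1:ℕ)) b := by
      rw [pow_succ', Equiv.Perm.mul_apply]
    have hφm2 : φ m = (φ^(i₀+1:ℕ)) b := by rw [← him]; exact hφm
    refine ⟨Nat.pair b (s-1), ?_, ?_⟩
    · rw [Phi_eq, ← hbdef, g_pair, ← him, Q_fin φ hb hs0 (s-1) (by omega) i₀ hi₀, hφm]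
      by_cases hc : i₀ ≤ s - 2 ∧ 2 ≤ s
      · apply npow_congr
        split_ifs <;> omega
      · have hieq : i₀ = s - 1 := by omega
        have h0 : (φ^(i₀+1:ℕ)) b = (φ^(0:ℕ)) b := by
          have he : i₀ + 1 = s := by omega
          rw [he, hsdef, npow_period φ b]
          rfl
        rw [h0]
        apply npow_congr
        split_ifs <;> omega
    · intro n hn
      rw [tt]
      by_cases hb' : n.unpair.1 = b
      · have hn' : n = Nat.pair b n.unpair.2 := by rw [← hb', Nat.pair_unpair]
        set j := n.unpair.2 with hjdef
        have hjge : s - 1 ≤ j := by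
          by_contra hh
          have := (pair_lt_iff b).mpr (by omega : j < s-1)
          omega
        rw [hb']
        unfold T
        rw [if_pos hb, if_neg (by omega), if_neg (by omega)]
        rfl
      · apply T_fix
        have hsc : φ.SameCycle b (φ m) := by
          rw [hφm2]; exact sc_npow φ b _
        rw [base_of_sc φ hb hsc]
        exact fun hh => hb' hh.symm

lemma swap_zpow_eq {b : ℕ} (hs : Function.minimalPeriod (⇑φ) b = 0)
    {a₁ c₁ a₂ c₂ : ℤ} (hne : a₁ ≠ c₁)
    (h : Equiv.swap ((φ^a₁) b) ((φ^c₁) b) = Equiv.swap ((φ^a₂) b) ((φ^c₂) b)) :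
    (a₁ = a₂ ∧ c₁ = c₂) ∨ (a₁ = c₂ ∧ c₁ = a₂) := by
  have h1 : (φ^c₁) b = Equiv.swap ((φ^a₂) b) ((φ^c₂) b) ((φ^a₁) b) := by
    rw [← h, Equiv.swap_apply_left]
  have h2 : (φ^a₁) b = Equiv.swap ((φ^a₂) b) ((φ^c₂) b) ((φ^c₁) b) := by
    rw [← h, Equiv.swap_apply_right]
  rw [swap_zpow_apply φ hs] at h1 h2
  have h1' := zinj φ hs h1
  have h2' := zinj φ hs h2
  split_ifs at h1' h2' <;> omega

lemma swap_pow_eq {b : ℕ} (hs0 : 0 < Function.minimalPeriod (⇑φ) b)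
    {a₁ c₁ a₂ c₂ : ℕ}
    (ha₁ : a₁ < Function.minimalPeriod (⇑φ) b) (hc₁ : c₁ < Function.minimalPeriod (⇑φ) b)
    (ha₂ : a₂ < Function.minimalPeriod (⇑φ) b) (hc₂ : c₂ < Function.minimalPeriod (⇑φ) b)
    (hne : a₁ ≠ c₁)
    (h : Equiv.swap ((φ^a₁) b) ((φ^c₁) b) = Equiv.swap ((φ^a₂) b) ((φ^c₂) b)) :
    (a₁ = a₂ ∧ c₁ = c₂) ∨ (a₁ = c₂ ∧ c₁ = a₂) := by
  have h1 : (φ^c₁) b = Equiv.swap ((φ^a₂) b) ((φ^c₂) b) ((φ^a₁) b) := by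
    rw [← h, Equiv.swap_apply_left]
  have h2 : (φ^a₁) b = Equiv.swap ((φ^a₂) b) ((φ^c₂) b) ((φ^c₁) b) := by
    rw [← h, Equiv.swap_apply_right]
  rw [swap_pow_apply φ hs0 ha₂ hc₂ ha₁] at h1
  rw [swap_pow_apply φ hs0 ha₂ hc₂ hc₁] at h2
  have h1' := ninj φ hs0 hc₁ (by split_ifs <;> omega) h1
  have h2' := ninj φ hs0 ha₁ (by split_ifs <;> omega) h2
  split_ifs at h1' h2' <;> omega

lemma T_inj {b : ℕ} (hb : base φ b = b) {j₁ j₂ : ℕ}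
    (h1 : T φ b j₁ ≠ 1) (heq : T φ b j₁ = T φ b j₂) : j₁ = j₂ := by
  by_cases hs : Function.minimalPeriod (⇑φ) b = 0
  · have hT : ∀ j : ℕ, T φ b j = if j % 2 = 0 then
        Equiv.swap ((φ^(-((j:ℤ)/2)-1)) b) ((φ^((j:ℤ)/2+1)) b)
      else Equiv.swap ((φ^(-((j:ℤ)/2))) b) ((φ^((j:ℤ)/2+1)) b) := by
      intro j; unfold T; rw [if_pos hb, if_pos hs]
    rw [hT j₁, hT j₂] at heq
    by_cases p1 : j₁ % 2 = 0 <;> by_cases p2 : j₂ % 2 = 0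
    · rw [if_pos p1, if_pos p2] at heq
      have := swap_zpow_eq φ hs (by omega) heq; omega
    · rw [if_pos p1, if_neg p2] at heq
      have := swap_zpow_eq φ hs (by omega) heq; omega
    · rw [if_neg p1, if_pos p2] at heq
      have := swap_zpow_eq φ hs (by omega) heq; omega
    · rw [if_neg p1, if_neg p2] at heq
      have := swap_zpow_eq φ hs (by omega) heq; omega
  · have hs0 : 0 < Function.minimalPeriod (⇑φ) b := by omega
    set s := Function.minimalPeriod (⇑φ) b with hsdef
    by_cases c1 : 2 ≤ s ∧ j₁ ≤ s - 2
    · by_cases c2 : 2 ≤ s ∧ j₂ ≤ s - 2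
      · have hT1 : T φ b j₁ = Equiv.swap ((φ^(s-2-j₁)) b) ((φ^(s-1-j₁)) b) := by
          unfold T; rw [if_pos hb, if_neg (by omega), if_pos c1]
        have hT2 : T φ b j₂ = Equiv.swap ((φ^(s-2-j₂)) b) ((φ^(s-1-j₂)) b) := by
          unfold T; rw [if_pos hb, if_neg (by omega), if_pos c2]
        rw [hT1, hT2] at heq
        have := swap_pow_eq φ hs0 (by omega) (by omega) (by omega) (by omega)
          (by omega) heq
        omega
      · exfalso
        apply h1
        rw [heq]
        unfold T
        rw [if_pos hb, if_neg (by omega), if_neg c2]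
    · exfalso
      apply h1
      unfold T
      rw [if_pos hb, if_neg (by omega), if_neg c1]

end Stmt7

/-- Every permutation `φ` of `ℕ` is a convergent (possibly finite, padded by identities)
product of transpositions: there is a sequence `t` of permutations, each either the identity or
a transposition, such that the partial compositions `Φ_n = t_{n-1} ∘ ⋯ ∘ t_0` converge
pointwise to `φ`, each transposition occurs at most once, and each `m` is moved by at most
two of the `t i`. -/
theorem stmt7 (φ : Equiv.Perm ℕ) :
    ∃ t : ℕ → Equiv.Perm ℕ,
      (∀ i, t i = 1 ∨ ∃ a b : ℕ, a ≠ b ∧ t i = Equiv.swap a b) ∧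
      (∀ i j, i ≠ j → t i ≠ 1 → t i ≠ t j) ∧
      (∀ m : ℕ, {i | t i m ≠ m}.encard ≤ 2) ∧
      (∀ m : ℕ, ∃ N, ∀ n ≥ N,
        ((List.range n).foldl (fun acc i => t i * acc) 1) m = φ m) := by
  refine ⟨Stmt7.tt φ, ?_, ?_, ?_, ?_⟩
  · intro i
    rcases Stmt7.T_cases φ i.unpair.1 i.unpair.2 with h | ⟨u, v, huv, hT, _, _, _⟩
    · left; exact h
    · right; exact ⟨u, v, huv, hT⟩
  · -- distinctness
    intro n1 n2 hne hne1 heq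
    rcases Stmt7.T_cases φ n1.unpair.1 n1.unpair.2 with h | ⟨u, v, huv, hT, hu, hv, hb1⟩
    · exact hne1 h
    rcases Stmt7.T_cases φ n2.unpair.1 n2.unpair.2 with h2 | ⟨u', v', huv', hT', hu', hv', hb2⟩
    · apply hne1
      rw [show Stmt7.tt φ n1 = Stmt7.tt φ n2 from heq]
      exact h2
    have hswap : Equiv.swap u v = Equiv.swap u' v' := by
      rw [← hT, ← hT']
      exact heq
    -- u' is moved by swap u v
    have hmem : u' = u ∨ u' = v := by
      by_contra hh
      push_neg at hh
      have : Equiv.swap u v u' = u' :=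
        Equiv.swap_apply_of_ne_of_ne hh.1 hh.2
      rw [hswap, Equiv.swap_apply_left] at this
      exact huv' this.symm
    have hbb : n1.unpair.1 = n2.unpair.1 := by
      rcases hmem with h' | h'
      · have e1 := Stmt7.base_of_sc φ hb1 (h' ▸ hu)
        have e2 := Stmt7.base_of_sc φ hb2 hu'
        rw [e2] at e1; exact e1.symm
      · have e1 := Stmt7.base_of_sc φ hb1 (h' ▸ hv)
        have e2 := Stmt7.base_of_sc φ hb2 hu'
        rw [e2] at e1; exact e1.symm
    have hT1 : Stmt7.T φ n1.unpair.1 n1.unpair.2 ≠ 1 := by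
      rw [hT]
      intro h
      have h3 : Equiv.swap u v u = (1 : Equiv.Perm ℕ) u := by rw [h]
      simp only [Equiv.swap_apply_left, Equiv.Perm.one_apply] at h3
      exact huv h3.symm
    have heq' : Stmt7.T φ n1.unpair.1 n1.unpair.2
        = Stmt7.T φ n1.unpair.1 n2.unpair.2 := by
      rw [hT, hbb, hT', hswap]
    have hjj : n1.unpair.2 = n2.unpair.2 := Stmt7.T_inj φ hb1 hT1 heq'
    apply hne
    rw [← Nat.pair_unpair n1, ← Nat.pair_unpair n2, hbb, hjj]
  · -- each m moved at most twice
    intro m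
    have hb : Stmt7.base φ (Stmt7.base φ m) = Stmt7.base φ m := Stmt7.base_base φ m
    set b := Stmt7.base φ m with hbdef
    obtain ⟨i, hi⟩ : φ.SameCycle b m := (Stmt7.sameCycle_base φ m).symm
    by_cases hs : Function.minimalPeriod (⇑φ) b = 0
    · refine le_trans (Set.encard_mono (?_ :
        {n | Stmt7.tt φ n m ≠ m} ⊆
          {Nat.pair b (2*(i.natAbs - 1)),
           Nat.pair b (2*(if 0 < i then (i-1).toNat else (-i).toNat) + 1)})) ?_
      · intro n hn
        simp only [Set.mem_setOf_eq] at hn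
        have hb' : n.unpair.1 = b := by
          by_contra h
          exact hn (Stmt7.T_fix φ _ _ m (fun hh => h (by rw [hbdef, hh])))
        have hj : n = Nat.pair b n.unpair.2 := by rw [← hb', Nat.pair_unpair]
        have hn' : Stmt7.T φ b n.unpair.2 m ≠ m := by rw [← hb']; exact hn
        set j := n.unpair.2 with hjdef
        rw [← hi] at hn'
        unfold Stmt7.T at hn'
        rw [if_pos hb, if_pos hs] at hn'
        by_cases hp : j % 2 = 0
        · rw [if_pos hp, Stmt7.swap_zpow_apply φ hs] at hn'
          have hij : i = -((j:ℤ)/2)-1 ∨ i = (j:ℤ)/2+1 := by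
            by_contra h
            push_neg at h
            rw [if_neg h.1, if_neg h.2] at hn'
            exact hn' rfl
          refine Set.mem_insert_iff.mpr (Or.inl ?_)
          rw [hj]
          congr 1
          omega
        · rw [if_neg hp, Stmt7.swap_zpow_apply φ hs] at hn'
          have hij : i = -((j:ℤ)/2) ∨ i = (j:ℤ)/2+1 := by
            by_contra h
            push_neg at h
            rw [if_neg h.1, if_neg h.2] at hn'
            exact hn' rfl
          refine Set.mem_insert_iff.mpr (Or.inr (Set.mem_singleton_iff.mpr ?_))
          rw [hj]
          by_cases hpos : 0 < i
          · rw [if_pos hpos]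
            congr 1
            omega
          · rw [if_neg hpos]
            congr 1
            omega
      · exact le_trans (Set.encard_insert_le _ _)
          (by rw [Set.encard_singleton]; norm_num)
    · have hs0 : 0 < Function.minimalPeriod (⇑φ) b := by omega
      obtain ⟨i₀, hi₀, hei⟩ := Stmt7.reduce_exp φ hs0 i
      have him : (φ^(i₀:ℕ)) b = m := by rw [hei, hi]
      refine le_trans (Set.encard_mono (?_ :
        {n | Stmt7.tt φ n m ≠ m} ⊆
          {Nat.pair b (Function.minimalPeriod (⇑φ) b - 2 - i₀),
           Nat.pair b (Function.minimalPeriod (⇑φ) b - 1 - i₀)})) ?_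
      · intro n hn
        simp only [Set.mem_setOf_eq] at hn
        have hb' : n.unpair.1 = b := by
          by_contra h
          exact hn (Stmt7.T_fix φ _ _ m (fun hh => h (by rw [hbdef, hh])))
        have hj : n = Nat.pair b n.unpair.2 := by rw [← hb', Nat.pair_unpair]
        have hn' : Stmt7.T φ b n.unpair.2 m ≠ m := by rw [← hb']; exact hn
        set j := n.unpair.2 with hjdef
        unfold Stmt7.T at hn'
        rw [if_pos hb, if_neg hs] at hn'
        by_cases hc : 2 ≤ Function.minimalPeriod (⇑φ) b ∧
            j ≤ Function.minimalPeriod (⇑φ) b - 2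
        · rw [if_pos hc, ← him,
            Stmt7.swap_pow_apply φ hs0 (by omega) (by omega) hi₀] at hn'
          have hij : i₀ = Function.minimalPeriod (⇑φ) b - 2 - j ∨
              i₀ = Function.minimalPeriod (⇑φ) b - 1 - j := by
            by_contra h
            push_neg at h
            rw [if_neg h.1, if_neg h.2] at hn'
            exact hn' rfl
          rcases hij with h' | h'
          · refine Set.mem_insert_iff.mpr (Or.inl ?_)
            rw [hj]
            congr 1
            omega
          · refine Set.mem_insert_iff.mpr (Or.inr (Set.mem_singleton_iff.mpr ?_))
            rw [hj]
            congr 1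
            omega
        · rw [if_neg hc] at hn'
          exact absurd rfl hn'
      · exact le_trans (Set.encard_insert_le _ _)
          (by rw [Set.encard_singleton]; norm_num)
  · -- convergence
    intro m
    obtain ⟨N, h1, h2⟩ := Stmt7.key φ m
    refine ⟨N, ?_⟩
    intro n hn
    induction n, hn using Nat.le_induction with
    | base => exact h1
    | succ n hn ih =>
      have : Stmt7.Φ φ (n+1) m = Stmt7.tt φ n (Stmt7.Φ φ n m) := by
        rw [Stmt7.Φ_succ, Equiv.Perm.mul_apply]
      exact this.trans (by rw [show Stmt7.Φ φ n m = φ m from ih, h2 n hn])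
end

section
/- In ℝ³ there exists a bounded sequence of pairwise distinct points (x_n)_{n∈ℕ} and a point r not in the sequence such that: dist(x_n, r) < 2^{-n-1} for all n (so x_n → r); no three points of {r} ∪ {x_n} are collinear; and no four points of {r} ∪ {x_n} are coplanar. -/
noncomputable def gam (t : ℝ) : EuclideanSpace ℝ (Fin 3) :=
  (WithLp.equiv 2 (Fin 3 → ℝ)).symm ![t, t^2, t^3]

@[simp] lemma gam_apply (t : ℝ) (i : Fin 3) : gam t i = ![t, t^2, t^3] i := rfl

lemma gam_inj : Function.Injective gam := by
  intro a b h
  have := congrFun (congrArg (WithLp.equiv 2 (Fin 3 → ℝ)) h) 0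
  simpa [gam] using this

lemma gam_li {a b c d : ℝ} (hab : a ≠ b) (hac : a ≠ c) (had : a ≠ d)
    (hbc : b ≠ c) (hbd : b ≠ d) (hcd : c ≠ d) :
    LinearIndependent ℝ ![gam b - gam a, gam c - gam a, gam d - gam a] := by
  rw [Fintype.linearIndependent_iff]
  intro g hg
  rw [Fin.sum_univ_three] at hg
  set M : Matrix (Fin 3) (Fin 3) ℝ :=
    !![b - a, b^2 - a^2, b^3 - a^3; c - a, c^2 - a^2, c^3 - a^3; d - a, d^2 - a^2, d^3 - a^3] with hM
  have hdet : M.det ≠ 0 := by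
    have : M.det = (b-a)*(c-a)*(d-a)*(c-b)*(d-b)*(d-c) := by
      simp [hM, Matrix.det_fin_three]; ring
    rw [this]
    have h1 : b - a ≠ 0 := sub_ne_zero.mpr hab.symm
    have h2 : c - a ≠ 0 := sub_ne_zero.mpr hac.symm
    have h3 : d - a ≠ 0 := sub_ne_zero.mpr had.symm
    have h4 : c - b ≠ 0 := sub_ne_zero.mpr hbc.symm
    have h5 : d - b ≠ 0 := sub_ne_zero.mpr hbd.symm
    have h6 : d - c ≠ 0 := sub_ne_zero.mpr hcd.symm
    positivity
  have hvm : Matrix.vecMul g M = 0 := by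
    funext j
    have hj := congrFun (congrArg (WithLp.equiv 2 (Fin 3 → ℝ)) hg) j
    fin_cases j <;> simp at hj <;>
      simp [hM, Matrix.vecMul, dotProduct, Fin.sum_univ_three] <;>
      linarith
  intro i
  have := Matrix.eq_zero_of_vecMul_eq_zero hdet hvm
  exact congrFun this i

def e4 : Fin 3 ≃ {x : Fin 4 // x ≠ 0} where
  toFun i := ⟨i.succ, Fin.succ_ne_zero i⟩
  invFun j := Fin.pred j.1 j.2
  left_inv i := by simp
  right_inv j := by ext; simp

lemma gam_affInd {a b c d : ℝ} (hab : a ≠ b) (hac : a ≠ c) (had : a ≠ d)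
    (hbc : b ≠ c) (hbd : b ≠ d) (hcd : c ≠ d) :
    AffineIndependent ℝ ![gam a, gam b, gam c, gam d] := by
  rw [affineIndependent_iff_linearIndependent_vsub ℝ _ 0]
  rw [← linearIndependent_equiv e4]
  have : (fun (i : {x : Fin 4 // x ≠ 0}) =>
      ![gam a, gam b, gam c, gam d] ↑i -ᵥ ![gam a, gam b, gam c, gam d] 0) ∘ e4 =
      ![gam b - gam a, gam c - gam a, gam d - gam a] := by
    funext i
    fin_cases i <;> simp [e4, vsub_eq_sub]
  rw [this]
  exact gam_li hab hac had hbc hbd hcd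

lemma gam_not_coplanar {a b c d : ℝ} (hab : a ≠ b) (hac : a ≠ c) (had : a ≠ d)
    (hbc : b ≠ c) (hbd : b ≠ d) (hcd : c ≠ d) :
    ¬ Coplanar ℝ ({gam a, gam b, gam c, gam d} : Set (EuclideanSpace ℝ (Fin 3))) := by
  intro h
  have hai := gam_affInd hab hac had hbc hbd hcd
  have hr : Set.range ![gam a, gam b, gam c, gam d] =
      ({gam a, gam b, gam c, gam d} : Set (EuclideanSpace ℝ (Fin 3))) := by
    simp only [Matrix.range_cons, Matrix.range_empty, Set.union_empty]
    ext p
    simp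
    tauto
  have hfr := hai.finrank_vectorSpan (n := 3) (by simp)
  rw [hr] at hfr
  rw [coplanar_iff_finrank_le_two] at h
  omega

lemma gam_not_collinear {a b c : ℝ} (hab : a ≠ b) (hac : a ≠ c) (hbc : b ≠ c) :
    ¬ Collinear ℝ ({gam a, gam b, gam c} : Set (EuclideanSpace ℝ (Fin 3))) := by
  intro h
  set d : ℝ := |a| + |b| + |c| + 1 with hd
  have ha' : a < d := by
    have := le_abs_self a; have := abs_nonneg b; have := abs_nonneg c; linarith
  have hb' : b < d := by
    have := le_abs_self b; have := abs_nonneg a; have := abs_nonneg c; linarith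
  have hc' : c < d := by
    have := le_abs_self c; have := abs_nonneg a; have := abs_nonneg b; linarith
  have hcop := h.coplanar_insert (gam d)
  have : insert (gam d) ({gam a, gam b, gam c} : Set (EuclideanSpace ℝ (Fin 3))) =
      ({gam d, gam a, gam b, gam c} : Set (EuclideanSpace ℝ (Fin 3))) := rfl
  rw [this] at hcop
  exact gam_not_coplanar ha'.ne' hb'.ne' hc'.ne' hab hac hbc hcop

lemma gam_dist {t : ℝ} (ht0 : 0 < t) (ht1 : t ≤ 1) : dist (gam t) (gam 0) ≤ 2 * t := by
  rw [EuclideanSpace.dist_eq, Fin.sum_univ_three]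
  have hle : dist (gam t 0) (gam 0 0) ^ 2 + dist (gam t 1) (gam 0 1) ^ 2
      + dist (gam t 2) (gam 0 2) ^ 2 ≤ (2 * t) ^ 2 := by
    simp [Real.dist_eq]
    rw [abs_of_pos ht0]
    have h2 : t ^ 2 ≤ 1 := by nlinarith
    have h4 : (t ^ 2) ^ 2 ≤ t ^ 2 := by nlinarith [mul_nonneg (sq_nonneg t) (sub_nonneg.mpr h2)]
    have h6 : (t ^ 3) ^ 2 ≤ t ^ 2 := by
      nlinarith [mul_nonneg (sq_nonneg t) (sub_nonneg.mpr h4), sq_nonneg t]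
    nlinarith [sq_nonneg t]
  calc Real.sqrt _ ≤ Real.sqrt ((2 * t) ^ 2) := Real.sqrt_le_sqrt hle
    _ = 2 * t := Real.sqrt_sq (by positivity)

/-- In `ℝ³` there is a bounded sequence of pairwise distinct points `x_n` and a point `r`
outside the sequence with `dist (x n) r < 2^{-n-1}` (so `x_n → r`), such that no three points
of `{r} ∪ {x_n}` are collinear and no four are coplanar. -/
theorem stmt9 :
    ∃ (x : ℕ → EuclideanSpace ℝ (Fin 3)) (r : EuclideanSpace ℝ (Fin 3)),
      Bornology.IsBounded (Set.range x) ∧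
      (∀ n m : ℕ, n ≠ m → x n ≠ x m) ∧
      r ∉ Set.range x ∧
      (∀ n : ℕ, dist (x n) r < (2 : ℝ) ^ (-(n : ℤ) - 1)) ∧
      (∀ p q s : EuclideanSpace ℝ (Fin 3),
        p ∈ insert r (Set.range x) → q ∈ insert r (Set.range x) →
        s ∈ insert r (Set.range x) → p ≠ q → p ≠ s → q ≠ s →
        ¬ Collinear ℝ {p, q, s}) ∧
      (∀ p q s u : EuclideanSpace ℝ (Fin 3),
        p ∈ insert r (Set.range x) → q ∈ insert r (Set.range x) →
        s ∈ insert r (Set.range x) → u ∈ insert r (Set.range x) →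
        p ≠ q → p ≠ s → p ≠ u → q ≠ s → q ≠ u → s ≠ u →
        ¬ Coplanar ℝ {p, q, s, u}) := by
  set f : ℕ → ℝ := fun n => (2 : ℝ) ^ (-(n : ℤ) - 3) with hf
  have hfpos : ∀ n, 0 < f n := fun n => by positivity
  have hfle1 : ∀ n, f n ≤ 1 := by
    intro n
    rw [hf]
    calc (2:ℝ) ^ (-(n : ℤ) - 3) ≤ (2:ℝ) ^ (0 : ℤ) := by
          apply zpow_le_zpow_right₀ one_le_two; omega
      _ = 1 := by norm_num
  have hfinj : Function.Injective f := by
    intro n m h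
    rcases lt_trichotomy n m with hlt | heq | hlt
    · have : f m < f n := zpow_lt_zpow_right₀ one_lt_two (by omega)
      rw [h] at this; exact absurd this (lt_irrefl _)
    · exact heq
    · have : f n < f m := zpow_lt_zpow_right₀ one_lt_two (by omega)
      rw [h] at this; exact absurd this (lt_irrefl _)
  have hdist : ∀ n : ℕ, dist (gam (f n)) (gam 0) < (2 : ℝ) ^ (-(n : ℤ) - 1) := by
    intro n
    have h1 : dist (gam (f n)) (gam 0) ≤ 2 * f n := gam_dist (hfpos n) (hfle1 n)
    have h2 : (2:ℝ) * f n = (2:ℝ) ^ (-(n : ℤ) - 2) := by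
      rw [hf]
      rw [show (-(n : ℤ) - 2) = (-(n : ℤ) - 3) + 1 by ring, zpow_add_one₀ two_ne_zero]
      ring
    have h3 : (2:ℝ) ^ (-(n : ℤ) - 2) < (2:ℝ) ^ (-(n : ℤ) - 1) :=
      zpow_lt_zpow_right₀ one_lt_two (by omega)
    linarith
  have hmem : ∀ p : EuclideanSpace ℝ (Fin 3),
      p ∈ insert (gam 0) (Set.range (fun n => gam (f n))) → ∃ t : ℝ, p = gam t := by
    rintro p (rfl | ⟨n, rfl⟩)
    · exact ⟨0, rfl⟩
    · exact ⟨f n, rfl⟩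
  refine ⟨fun n => gam (f n), gam 0, ?_, ?_, ?_, hdist, ?_, ?_⟩
  · apply (Metric.isBounded_ball (x := gam 0) (r := 1)).subset
    rintro _ ⟨n, rfl⟩
    rw [Metric.mem_ball]
    have := hdist n
    have h2 : (2:ℝ) ^ (-(n : ℤ) - 1) ≤ 1 := by
      calc (2:ℝ) ^ (-(n : ℤ) - 1) ≤ (2:ℝ) ^ (0 : ℤ) := by
            apply zpow_le_zpow_right₀ one_le_two; omega
        _ = 1 := by norm_num
    linarith
  · intro n m hnm h
    exact hnm (hfinj (gam_inj h))
  · rintro ⟨n, hn⟩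
    have := gam_inj hn
    exact (hfpos n).ne' this
  · intro p q s hp hq hs hpq hps hqs
    obtain ⟨a, rfl⟩ := hmem p hp
    obtain ⟨b, rfl⟩ := hmem q hq
    obtain ⟨c, rfl⟩ := hmem s hs
    exact gam_not_collinear (fun h => hpq (by rw [h])) (fun h => hps (by rw [h]))
      (fun h => hqs (by rw [h]))
  · intro p q s u hp hq hs hu hpq hps hpu hqs hqu hsu
    obtain ⟨a, rfl⟩ := hmem p hp
    obtain ⟨b, rfl⟩ := hmem q hq
    obtain ⟨c, rfl⟩ := hmem s hs
    obtain ⟨d, rfl⟩ := hmem u hu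
    exact gam_not_coplanar (fun h => hpq (by rw [h])) (fun h => hps (by rw [h]))
      (fun h => hpu (by rw [h])) (fun h => hqs (by rw [h])) (fun h => hqu (by rw [h]))
      (fun h => hsu (by rw [h]))
end

section
/- Suppose (h_i)_{i∈ℕ} is a sequence of homeomorphisms of ℝⁿ such that Σ_i dist_{C⁰}(id, h_i) < ∞, all h_i are supported in a common compact set K, and for every x ∈ ℝⁿ there exists N(x) such that h_n(h_{N(x)} ∘ ⋯ ∘ h_1(x)) = h_{N(x)} ∘ ⋯ ∘ h_1(x) for all n ≥ N(x). Then the compositions H_n = h_n ∘ ⋯ ∘ h_1 converge uniformly to a continuous injective map H : ℝⁿ → ℝⁿ which equals the identity outside K; consequently H is a homeomorphism of ℝⁿ. -/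
/-!
The estimate `dist (H_{n+1} x) (H_n x) ≤ a_n := sup_y dist (h_n y) y`, with `a_n` summable,
makes `(H_n)` uniformly Cauchy; eventual stabilization identifies the uniform limit `H` pointwise
with `H_{N(x)}`, which is what makes `H` injective. A preimage of `y` under `H_n` lies in the
compact set `{y} ∪ K`, so `y` is a limit of points of the compact image of `{y} ∪ K` under `H`,
hence `H` is onto. Being the identity off `K`, `H` is proper, hence closed: a homeomorphism.
-/

/-- The partial composition `h_{n-1} ∘ ⋯ ∘ h_0` of a sequence of homeomorphisms. -/
def iterComp {E : Type*} [TopologicalSpace E] (h : ℕ → (E ≃ₜ E)) : ℕ → E → E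
  | 0 => id
  | n + 1 => ⇑(h n) ∘ iterComp h n

open Filter Topology

section iterComp

variable {E : Type*} [TopologicalSpace E] (h : ℕ → (E ≃ₜ E))

theorem iterComp_succ_apply (n : ℕ) (x : E) : iterComp h (n + 1) x = h n (iterComp h n x) :=
  rfl

theorem continuous_iterComp (n : ℕ) : Continuous (iterComp h n) := by
  induction n with
  | zero => exact continuous_id
  | succ n ih => exact (h n).continuous.comp ih

theorem bijective_iterComp (n : ℕ) : Function.Bijective (iterComp h n) := by
  induction n with
  | zero => exact Function.bijective_id
  | succ n ih => exact (h n).bijective.comp ih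

theorem iterComp_apply_eq_self {x : E} (hx : ∀ i, h i x = x) (n : ℕ) : iterComp h n x = x := by
  induction n with
  | zero => rfl
  | succ n ih => rw [iterComp_succ_apply, ih, hx]

end iterComp

theorem bddAbove_range_dist_self_of_isCompact {X : Type*} [PseudoMetricSpace X] {f : X → X}
    (hf : Continuous f) {K : Set X} (hK : IsCompact K) (hfK : ∀ x ∉ K, f x = x) :
    BddAbove (Set.range fun x => dist (f x) x) := by
  refine ((hK.image (hf.dist continuous_id)).insert 0).isBounded.bddAbove.mono ?_
  rintro r ⟨x, rfl⟩
  by_cases hx : x ∈ K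
  · exact Set.mem_insert_of_mem _ ⟨x, hx, rfl⟩
  · simp [hfK x hx]

theorem uniformCauchySeqOn_of_dist_le_of_summable {α β : Type*} [PseudoMetricSpace β]
    {F : ℕ → α → β} {a : ℕ → ℝ} (hF : ∀ n x, dist (F n x) (F (n + 1) x) ≤ a n)
    (ha : Summable a) (s : Set α) : UniformCauchySeqOn F atTop s := by
  set S : ℕ → ℝ := fun n => ∑ i ∈ Finset.range n, a i
  have hFS : ∀ m n x, dist (F m x) (F n x) ≤ dist (S m) (S n) := by
    intro m n x
    wlog hmn : m ≤ n generalizing m n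
    · rw [dist_comm, dist_comm (S m)]
      exact this n m (le_of_not_ge hmn)
    calc dist (F m x) (F n x) ≤ ∑ i ∈ Finset.Ico m n, a i :=
          dist_le_Ico_sum_of_dist_le (f := (F · x)) hmn fun _ _ => hF _ x
      _ = S n - S m := Finset.sum_Ico_eq_sub _ hmn
      _ ≤ dist (S m) (S n) := by rw [dist_comm, Real.dist_eq]; exact le_abs_self _
  rw [Metric.uniformCauchySeqOn_iff]
  intro ε hε
  obtain ⟨N, hN⟩ := Metric.cauchySeq_iff.1 ha.hasSum.tendsto_sum_nat.cauchySeq ε hε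
  exact ⟨N, fun m hm n hn x _ => (hFS m n x).trans_lt (hN m hm n hn)⟩

theorem injective_of_eventually_eq_injective {ι α β : Type*} {l : Filter ι} [l.NeBot]
    {F : ι → α → β} {G : α → β} (hF : ∀ i, Function.Injective (F i))
    (hFG : ∀ x, ∀ᶠ i in l, F i x = G x) : Function.Injective G := by
  intro x y hxy
  obtain ⟨i, hx, hy⟩ := ((hFG x).and (hFG y)).exists
  exact hF i (by rw [hx, hy, hxy])

theorem surjective_of_tendstoUniformly_of_eq_self {X : Type*} [UniformSpace X] [T2Space X]
    {F : ℕ → X → X} {G : X → X} (hF : ∀ n, Function.Surjective (F n))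
    (hFG : TendstoUniformly F G atTop) (hG : Continuous G) {K : Set X} (hK : IsCompact K)
    (hFK : ∀ n, ∀ x ∉ K, F n x = x) : Function.Surjective G := by
  intro y
  choose xs hxs using fun n => hF n y
  have hxsK : ∀ n, xs n ∈ insert y K := by
    intro n
    by_cases hn : xs n ∈ K
    · exact Set.mem_insert_of_mem _ hn
    · rw [← hFK n _ hn, hxs n]
      exact Set.mem_insert y K
  have hlim : Tendsto (fun n => G (xs n)) atTop (𝓝 y) :=
    Uniform.tendsto_nhds_left.2 fun U hU =>
      (hFG U hU).mono fun n hn => by simpa [hxs n] using hn (xs n)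
  obtain ⟨x, -, hx⟩ := ((hK.insert y).image hG).isClosed.mem_of_tendsto hlim
    (Eventually.of_forall fun n => Set.mem_image_of_mem G (hxsK n))
  exact ⟨x, hx⟩

theorem isProperMap_of_eq_self_off_isCompact {X : Type*} [TopologicalSpace X] [T2Space X]
    [CompactlyCoherentSpace X] {f : X → X} (hf : Continuous f) {K : Set X} (hK : IsCompact K)
    (hfK : ∀ x ∉ K, f x = x) : IsProperMap f := by
  refine isProperMap_iff_isCompact_preimage.2 ⟨hf, fun C hC => ?_⟩
  refine (hK.union hC).of_isClosed_subset (hC.isClosed.preimage hf) fun x hx => ?_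
  by_cases hxK : x ∈ K
  · exact Or.inl hxK
  · exact Or.inr (hfK x hxK ▸ hx)

/-- If homeomorphisms `h_i` of `ℝᵈ` are supported in a common compact set `K`, satisfy
`Σ_i dist_{C⁰}(id, h_i) < ∞`, and every point is eventually stabilized by the partial
compositions, then the compositions converge uniformly to a homeomorphism `H` of `ℝᵈ`
which is the identity outside `K`. -/
theorem stmt17 {d : ℕ} (h : ℕ → (EuclideanSpace ℝ (Fin d) ≃ₜ EuclideanSpace ℝ (Fin d)))
    (K : Set (EuclideanSpace ℝ (Fin d))) (hK : IsCompact K)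
    (hsupp : ∀ i, ∀ x ∉ K, h i x = x)
    (hsum : Summable fun i => ⨆ x, dist (h i x) x)
    (hstab : ∀ x, ∃ N, ∀ n ≥ N, iterComp h n x = iterComp h N x) :
    ∃ H : EuclideanSpace ℝ (Fin d) ≃ₜ EuclideanSpace ℝ (Fin d),
      TendstoUniformly (fun n => iterComp h n) (⇑H) Filter.atTop ∧
      ∀ x ∉ K, H x = x := by
  have hstep : ∀ n x, dist (iterComp h n x) (iterComp h (n + 1) x) ≤ ⨆ y, dist (h n y) y :=
    fun n x => by
      rw [dist_comm, iterComp_succ_apply]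
      exact le_ciSup (bddAbove_range_dist_self_of_isCompact (h n).continuous hK (hsupp n)) _
  choose N hN using hstab
  set H := fun x => iterComp h (N x) x
  have hev : ∀ x, ∀ᶠ n in atTop, iterComp h n x = H x :=
    fun x => eventually_atTop.2 ⟨N x, hN x⟩
  have hHK : ∀ x ∉ K, H x = x := fun x hx => iterComp_apply_eq_self h (fun i => hsupp i x hx) _
  have hunif : TendstoUniformly (fun n => iterComp h n) H atTop :=
    tendstoUniformlyOn_univ.1 <| (uniformCauchySeqOn_of_dist_le_of_summable hstep hsum _)
      |>.tendstoUniformlyOn_of_tendsto fun x _ =>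
        tendsto_const_nhds.congr' (EventuallyEq.symm (hev x))
  have hHc : Continuous H := hunif.continuous (Frequently.of_forall (continuous_iterComp h))
  have hHbij : Function.Bijective H :=
    ⟨injective_of_eventually_eq_injective (fun n => (bijective_iterComp h n).1) hev,
      surjective_of_tendstoUniformly_of_eq_self (fun n => (bijective_iterComp h n).2) hunif hHc
        hK fun n x hx => iterComp_apply_eq_self h (fun i => hsupp i x hx) n⟩
  exact ⟨(Equiv.ofBijective H hHbij).toHomeomorphOfContinuousClosed hHc
    (isProperMap_of_eq_self_off_isCompact hHc hK hHK).isClosedMap, hunif, hHK⟩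
end
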